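/- arXiv:1802.10163 — 5 statements merged into one kernel-verified Lean document; each statement's English description precedes it below -/
import Mathlib

section
/- Let G = (V,E) be a directed mixed graph, let α, β ∈ V and C ⊆ V. If there exists a μ-connecting walk from α to β given C in G, then there exists a μ-connecting walk from α to β given C in G with the further property that every collider on the walk lies in C. -/
/-!
Directed mixed graphs (DMGs) with μ-separation, following
Mogensen & Hansen, "Markov equivalence of marginalized local independence graphs".
-/

universe u

/-- A directed mixed graph on node set `V`: a set of directed edges (`dir a b`
meaning `a → b`) and a set of bidirected edges (`bi`, a symmetric relation since
bidirected edges are unordered pairs).  Loops are allowed. -/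
structure DMG (V : Type u) where
  dir : V → V → Prop
  bi : V → V → Prop
  bi_symm : ∀ a b, bi a b → bi b a

namespace DMG

variable {V : Type u}

/-- A single step of a walk: an edge instance together with the direction in
which it is traversed (this records, in particular, orientations of loops).
A directed edge has a tail at its source and a head at its target; a bidirected
edge has heads at both endpoints. -/
inductive Step (G : DMG V) : V → V → Type u
  | dirF : ∀ {a b : V}, G.dir a b → Step G a b
  | dirB : ∀ {a b : V}, G.dir b a → Step G a b
  | bid  : ∀ {a b : V}, G.bi a b → Step G a b

/-- Whether the step has a head (edge mark) at its start node. -/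
def Step.headStart {G : DMG V} : ∀ {a b : V}, Step G a b → Bool
  | _, _, .dirF _ => false
  | _, _, .dirB _ => true
  | _, _, .bid _ => true

/-- Whether the step has a head (edge mark) at its end node. -/
def Step.headEnd {G : DMG V} : ∀ {a b : V}, Step G a b → Bool
  | _, _, .dirF _ => true
  | _, _, .dirB _ => false
  | _, _, .bid _ => true

/-- The step traverses a bidirected edge. -/
def Step.IsBid {G : DMG V} {a b : V} : Step G a b → Prop
  | .bid _ => True
  | _ => False

/-- The step traverses a directed edge, forwards. -/
def Step.IsDirF {G : DMG V} {a b : V} : Step G a b → Prop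
  | .dirF _ => True
  | _ => False

/-- The underlying edge of a step: a directed edge is the ordered pair
(tail, head); a bidirected edge is the unordered pair of its endpoints. -/
def Step.edge {G : DMG V} : ∀ {a b : V}, Step G a b → (V × V) ⊕ (Sym2 V)
  | a, b, .dirF _ => Sum.inl (a, b)
  | a, b, .dirB _ => Sum.inl (b, a)
  | a, b, .bid _ => Sum.inr s(a, b)

/-- A walk in a DMG: an alternating sequence of nodes and edges, each edge
between its neighbouring nodes, with a chosen orientation of each edge
(in particular of each directed loop). -/
inductive Walk (G : DMG V) : V → V → Type u
  | nil (a : V) : Walk G a a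
  | cons {a b c : V} (s : Step G a b) (w : Walk G b c) : Walk G a c

namespace Walk

variable {G : DMG V}

/-- A nontrivial walk contains at least one edge. -/
def Nontrivial : ∀ {a b : V}, Walk G a b → Prop
  | _, _, .nil _ => False
  | _, _, .cons _ _ => True

/-- The list of nodes of a walk, in order (with multiplicity). -/
def nodes : ∀ {a b : V}, Walk G a b → List V
  | a, _, .nil _ => [a]
  | a, _, .cons _ w => a :: w.nodes

/-- The non-endpoint (internal) nodes of a walk, in order (with multiplicity). -/
def interior {a b : V} (w : Walk G a b) : List V :=
  (w.nodes.dropLast).drop 1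

/-- The list of edges of a walk. -/
def edges : ∀ {a b : V}, Walk G a b → List ((V × V) ⊕ (Sym2 V))
  | _, _, .nil _ => []
  | _, _, .cons s w => s.edge :: w.edges

/-- Whether the first edge of the walk has a head at the first node
(`false` for a trivial walk). -/
def firstHead : ∀ {a b : V}, Walk G a b → Bool
  | _, _, .nil _ => false
  | _, _, .cons s _ => s.headStart

/-- Whether the last edge of the walk has a head at the last node
(`false` for a trivial walk). -/
def lastHead : ∀ {a b : V}, Walk G a b → Bool
  | _, _, .nil _ => false
  | _, _, .cons s (.nil _) => s.headEnd
  | _, _, .cons _ (.cons t w) => lastHead (Walk.cons t w)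

/-- Helper: conditions at all remaining internal node instances of a walk,
where `h` records whether the edge arriving at the current start node has a
head there.  A node instance is a collider if both adjoining edges have a
head at it; a collider must lie in `Anc`, a noncollider must avoid `C`. -/
def openFrom (C Anc : Set V) : ∀ {a b : V}, Bool → Walk G a b → Prop
  | _, _, _, .nil _ => True
  | a, _, h, .cons s w =>
      (if h && s.headStart then a ∈ Anc else a ∉ C) ∧ openFrom C Anc s.headEnd w

/-- Helper: every remaining internal node instance which is a collider lies in `S`. -/
def collInFrom (S : Set V) : ∀ {a b : V}, Bool → Walk G a b → Prop
  | _, _, _, .nil _ => True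
  | a, _, h, .cons s w =>
      ((h && s.headStart) = true → a ∈ S) ∧ collInFrom S s.headEnd w

/-- Every collider (internal node instance with heads on both sides) of the
walk lies in `S`. -/
def CollidersIn (S : Set V) : ∀ {a b : V}, Walk G a b → Prop
  | _, _, .nil _ => True
  | _, _, .cons s w => collInFrom S s.headEnd w

/-- The walk has no colliders. -/
def NoColliders {a b : V} (w : Walk G a b) : Prop :=
  w.CollidersIn ∅

/-- Helper: every remaining internal node instance is a collider. -/
def allCollFrom : ∀ {a b : V}, Bool → Walk G a b → Prop
  | _, _, _, .nil _ => True
  | _, _, h, .cons s w => (h && s.headStart) = true ∧ allCollFrom s.headEnd w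

/-- Every internal node instance of the walk is a collider (no noncolliders). -/
def AllColliders : ∀ {a b : V}, Walk G a b → Prop
  | _, _, .nil _ => True
  | _, _, .cons s w => allCollFrom s.headEnd w

/-- Every edge of the walk is bidirected. -/
def AllBid : ∀ {a b : V}, Walk G a b → Prop
  | _, _, .nil _ => True
  | _, _, .cons s w => s.IsBid ∧ w.AllBid

/-- The walk consists of a directed first edge (pointing forwards) followed by
bidirected edges only (the form `α → β` or `α → γ₁ ↔ ⋯ ↔ γₙ ↔ β`). -/
def UniForm : ∀ {a b : V}, Walk G a b → Prop
  | _, _, .nil _ => False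
  | _, _, .cons s w => s.IsDirF ∧ w.AllBid

end Walk

/-- `a` is an ancestor of `b`: there is a (possibly trivial) directed path
from `a` to `b`. -/
def anc (G : DMG V) (a b : V) : Prop := Relation.ReflTransGen G.dir a b

/-- The set of ancestors of nodes of `C`. -/
def anSet (G : DMG V) (C : Set V) : Set V := {a | ∃ c ∈ C, G.anc a c}

/-- The walk is μ-connecting given `C`: it is nontrivial, its first node is not
in `C`, every collider lies in `An(C)`, no noncollider lies in `C`, and its
final edge has a head at the final node. -/
def Walk.MuConn {G : DMG V} (C : Set V) : ∀ {a b : V}, Walk G a b → Prop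
  | _, _, .nil _ => False
  | a, _, .cons s w =>
      a ∉ C ∧ Walk.openFrom C (G.anSet C) s.headEnd w ∧ (Walk.cons s w).lastHead = true

/-- `B` is μ-separated from `A` given `C` in `G`: there is no μ-connecting
walk from any node of `A` to any node of `B` given `C`. -/
def muSep (G : DMG V) (A B C : Set V) : Prop :=
  ∀ ⦃a b : V⦄, a ∈ A → b ∈ B → ∀ w : Walk G a b, ¬ w.MuConn C

/-- Two DMGs on the same node set are Markov equivalent: they induce the same
independence model via μ-separation, i.e. `I(G₁) = I(G₂)`. -/
def MarkovEq (G₁ G₂ : DMG V) : Prop :=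
  ∀ A B C : Set V, muSep G₁ A B C ↔ muSep G₂ A B C

/-- `b` is separable from `a` in `I(G)`: there is `C ⊆ V ∖ {a}` with
`⟨{a},{b} | C⟩ ∈ I(G)`. -/
def separable (G : DMG V) (a b : V) : Prop :=
  ∃ C : Set V, a ∉ C ∧ muSep G {a} {b} C

/-- `a ∈ u(b, I(G))`: `b` is inseparable from `a` in `I(G)`. -/
def inU (G : DMG V) (a b : V) : Prop := ¬ G.separable a b

/-- `G₁` is a subgraph of `G₂` (same node set, edge-set inclusion). -/
def Sub (G₁ G₂ : DMG V) : Prop :=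
  (∀ a b, G₁.dir a b → G₂.dir a b) ∧ (∀ a b, G₁.bi a b → G₂.bi a b)

/-- The DMG obtained by adding the directed edge `a → b`. -/
def addDir (G : DMG V) (a b : V) : DMG V where
  dir x y := G.dir x y ∨ (x = a ∧ y = b)
  bi := G.bi
  bi_symm := G.bi_symm

/-- The DMG obtained by adding the bidirected edge `a ↔ b`. -/
def addBi (G : DMG V) (a b : V) : DMG V where
  dir := G.dir
  bi x y := G.bi x y ∨ (x = a ∧ y = b) ∨ (x = b ∧ y = a)
  bi_symm x y h := by
    rcases h with h | h | h
    · exact Or.inl (G.bi_symm _ _ h)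
    · exact Or.inr (Or.inr ⟨h.2, h.1⟩)
    · exact Or.inr (Or.inl ⟨h.2, h.1⟩)

/-- The DMG obtained by removing the directed edge `a → b`. -/
def removeDir (G : DMG V) (a b : V) : DMG V where
  dir x y := G.dir x y ∧ ¬(x = a ∧ y = b)
  bi := G.bi
  bi_symm := G.bi_symm

/-- The DMG obtained by removing the bidirected edge `a ↔ b`. -/
def removeBi (G : DMG V) (a b : V) : DMG V where
  dir := G.dir
  bi x y := G.bi x y ∧ ¬((x = a ∧ y = b) ∨ (x = b ∧ y = a))
  bi_symm x y h := ⟨G.bi_symm _ _ h.1, fun hc => h.2 (by tauto)⟩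

/-- The complete DMG: all directed and all bidirected edges present. -/
def IsComplete (G : DMG V) : Prop :=
  (∀ a b, G.dir a b) ∧ (∀ a b, G.bi a b)

/-- A DMG is maximal if it is complete, or adding any (absent) edge changes the
induced independence model. -/
def IsMaximal (G : DMG V) : Prop :=
  G.IsComplete ∨
    ∀ a b : V, (¬ G.dir a b → ¬ MarkovEq (G.addDir a b) G) ∧
      (¬ G.bi a b → ¬ MarkovEq (G.addBi a b) G)

end DMG
namespace DMG

variable {V : Type u}

/-- An inducing path from `a` to `b`: a nontrivial path or cycle from `a` to
`b` with a head at `b`, with no noncolliders, and on which every node is an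
ancestor of `a` or of `b`. -/
def IsInducingPath (G : DMG V) {a b : V} (w : Walk G a b) : Prop :=
  w.Nontrivial ∧
  (w.nodes.Nodup ∨ (a = b ∧ w.nodes.dropLast.Nodup)) ∧
  w.lastHead = true ∧
  w.AllColliders ∧
  ∀ x ∈ w.nodes, G.anc x a ∨ G.anc x b

/-- A bidirected inducing path: an inducing path all of whose edges are bidirected. -/
def IsBidirectedIP (G : DMG V) {a b : V} (w : Walk G a b) : Prop :=
  G.IsInducingPath w ∧ w.AllBid

/-- A directed inducing path: an inducing path of the form `α → β` or
`α → γ₁ ↔ ⋯ ↔ γₙ ↔ β` with every `γᵢ` an ancestor of `β`. -/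
def IsDirectedIP (G : DMG V) {a b : V} (w : Walk G a b) : Prop :=
  G.IsInducingPath w ∧ w.UniForm ∧ ∀ x ∈ w.interior, G.anc x b

/-- There exists a nontrivial walk in `G` between `x` and `y` with no
colliders, all non-endpoint nodes in `M`, and with edge marks `hs` at `x`
(`true` = head) and `he` at `y`. -/
def ConnThrough (G : DMG V) (M : Set V) (x y : V) (hs he : Bool) : Prop :=
  ∃ w : Walk G x y, w.Nontrivial ∧ w.NoColliders ∧
    (∀ z ∈ w.interior, z ∈ M) ∧ w.firstHead = hs ∧ w.lastHead = he

/-- The latent projection `m(G, O)` of `G` on `O`: the DMG on node set `O`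
having an edge (with given endpoint marks) between `α` and `β` if and only if
`G` contains a nontrivial endpoint-identical walk between `α` and `β` with no
colliders and all non-endpoint nodes in `M = V ∖ O`. -/
def latentProj (G : DMG V) (O : Set V) : DMG {x : V // x ∈ O} where
  dir x y := ConnThrough G Oᶜ x.1 y.1 false true
  bi x y := ConnThrough G Oᶜ x.1 y.1 true true ∨ ConnThrough G Oᶜ y.1 x.1 true true
  bi_symm x y h := h.symm

/-- `x` is directedly collider-connected to `b`: there is a nontrivial walk
from `x` to `b` with a head at `b` on which every non-endpoint node is a
collider. -/
def dirCollConn (G : DMG V) (x b : V) : Prop :=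
  ∃ w : Walk G x b, w.Nontrivial ∧ w.AllColliders ∧ w.lastHead = true

/-- The set `D(a,b)` of nodes in `An({a,b})` directedly collider-connected to
`b`, except `a`. -/
def Dset (G : DMG V) (a b : V) : Set V :=
  {x | x ∈ G.anSet {a, b} ∧ G.dirCollConn x b} \ {a}

/-- `a` and `b` are potential siblings in the independence model `I(G)`. -/
def PotSib (G : DMG V) (a b : V) : Prop :=
  (G.inU b a ∧ G.inU a b) ∧
  (∀ (γ : V) (C : Set V), b ∈ C → muSep G {γ} {a} C → muSep G {γ} {b} C) ∧
  (∀ (γ : V) (C : Set V), a ∈ C → muSep G {γ} {b} C → muSep G {γ} {a} C)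

/-- `a` is a potential parent of `b` in the independence model `I(G)`. -/
def PotPar (G : DMG V) (a b : V) : Prop :=
  G.inU a b ∧
  (∀ (γ : V) (C : Set V), a ∉ C → muSep G {γ} {b} C → muSep G {γ} {a} C) ∧
  (∀ (γ δ : V) (C : Set V), a ∉ C → b ∈ C →
    muSep G {γ} {δ} C → muSep G {γ} {b} C ∨ muSep G {a} {δ} C) ∧
  (∀ (γ : V) (C : Set V), a ∉ C → muSep G {b} {γ} C → muSep G {b} {γ} (C ∪ {a}))

/-- The graph `N(I(G))`: directed edge `a → b` present iff `a` is a potential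
parent of `b` in `I(G)`, bidirected edge `a ↔ b` present iff `a` and `b` are
potential siblings in `I(G)` (potential siblinghood is symmetric). -/
def NGraph (G : DMG V) : DMG V where
  dir a b := G.PotPar a b
  bi a b := G.PotSib a b ∨ G.PotSib b a
  bi_symm _ _ h := h.symm

/-- A path is m-connecting given `C` if it is a path (no repeated nodes), no
noncollider on it is in `C` and every collider on it is in `An(C)`. -/
def Walk.MConn {G : DMG V} (C : Set V) : ∀ {a b : V}, Walk G a b → Prop
  | _, _, .nil _ => True
  | _, _, .cons s w =>
      (Walk.cons s w).nodes.Nodup ∧ Walk.openFrom C (G.anSet C) s.headEnd w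

/-- `A` and `B` are m-separated by `C`: there is no m-connecting path between
a node of `A` and a node of `B` given `C`. -/
def mSep (G : DMG V) (A B C : Set V) : Prop :=
  ∀ ⦃a b : V⦄, a ∈ A → b ∈ B →
    (∀ w : Walk G a b, ¬ w.MConn C) ∧ (∀ w : Walk G b a, ¬ w.MConn C)

/-- Auxiliary directed-edge relation of the `B`-history version of `G`. -/
def histDir (G : DMG V) (B : Set V) : (V ⊕ {x : V // x ∈ B}) → (V ⊕ {x : V // x ∈ B}) → Prop
  | .inl u, .inl v => G.dir u v
  | .inl u, .inr v => G.dir u v.1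
  | _, _ => False

/-- Auxiliary bidirected-edge relation of the `B`-history version of `G`. -/
def histBi (G : DMG V) (B : Set V) : (V ⊕ {x : V // x ∈ B}) → (V ⊕ {x : V // x ∈ B}) → Prop
  | .inl u, .inl v => G.bi u v
  | .inl u, .inr v => G.bi u v.1
  | .inr u, .inl v => G.bi u.1 v
  | .inr _, .inr _ => False

/-- The `B`-history version `G(B)` of `G`: node set `V ⊔ Bᵖ`, whose subgraph
on `V` is `G`, with additionally `α ↔ βᵖ` whenever `α ↔ β` in `G` and
`α → βᵖ` whenever `α → β` in `G` (for `α ∈ V`, `β ∈ B`). -/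
def hist (G : DMG V) (B : Set V) : DMG (V ⊕ {x : V // x ∈ B}) where
  dir := G.histDir B
  bi := G.histBi B
  bi_symm x y h := by
    cases x <;> cases y <;>
      simp only [histBi] at h ⊢ <;>
      first
        | exact G.bi_symm _ _ h
        | exact h

end DMG

namespace DMG
namespace Walk

variable {V : Type u} {G : DMG V}

/-- `lastHead` with an accumulator for the trivial case. -/
def lastHeadFrom : ∀ {a b : V}, Bool → Walk G a b → Bool
  | _, _, h, .nil _ => h
  | _, _, _, .cons s w => lastHeadFrom s.headEnd w

theorem lastHead_cons : ∀ {a b c : V} (s : Step G a b) (w : Walk G b c),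
    (Walk.cons s w).lastHead = lastHeadFrom s.headEnd w
  | _, _, _, _, .nil _ => rfl
  | _, _, _, s, .cons t w => lastHead_cons t w

theorem mem_anSet_of_mem {C : Set V} {y : V} (hy : y ∈ C) : y ∈ G.anSet C :=
  ⟨y, hy, Relation.ReflTransGen.refl⟩

/-- Detour lemma: if `x ∉ C` has a directed path to some `c ∈ C`, then any
tail walk `u` from `x` (no head arriving at `x`) can be extended to one with
a head arriving at `x`, keeping openness, colliders in `C`, and the last head. -/
theorem detour {C : Set V} {c : V} (hcC : c ∈ C) :
    ∀ {x : V}, Relation.ReflTransGen G.dir x c → x ∉ C →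
    ∀ {b : V} (u : Walk G x b),
      openFrom C (G.anSet C) false u → collInFrom C false u →
      ∃ u' : Walk G x b, openFrom C (G.anSet C) true u' ∧ collInFrom C true u' ∧
        lastHeadFrom true u' = lastHeadFrom false u := by
  intro x hrt
  induction hrt using Relation.ReflTransGen.head_induction_on with
  | refl => exact fun hxC => absurd hcC hxC
  | head e hyc ih =>
    rename_i x y
    intro hxC b u hou hcu
    by_cases hyC : y ∈ C
    · refine ⟨Walk.cons (Step.dirF e) (Walk.cons (Step.dirB e) u), ?_, ?_, rfl⟩
      · refine ⟨by simp [Step.headStart, hxC], ?_, hou⟩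
        simp only [Step.headStart, Step.headEnd, Bool.and_true, if_pos]
        exact mem_anSet_of_mem hyC
      · exact ⟨by simp [Step.headStart], ⟨fun _ => hyC, hcu⟩⟩
    · obtain ⟨u'', h1, h2, h3⟩ := ih hyC (Walk.cons (Step.dirB e) u)
        ⟨by simp [Step.headStart, hyC], hou⟩ ⟨by simp [Step.headStart], hcu⟩
      refine ⟨Walk.cons (Step.dirF e) u'', ?_, ?_, h3⟩
      · exact ⟨by simp [Step.headStart, hxC], h1⟩
      · exact ⟨by simp [Step.headStart], h2⟩

/-- Main auxiliary lemma: any open walk can be replaced by an open walk with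
the same endpoints, arriving-head flag and final head, whose colliders all lie in `C`. -/
theorem fixWalk {C : Set V} : ∀ {x b : V} (h : Bool) (w : Walk G x b),
    openFrom C (G.anSet C) h w →
    ∃ w' : Walk G x b, openFrom C (G.anSet C) h w' ∧ collInFrom C h w' ∧
      lastHeadFrom h w' = lastHeadFrom h w := by
  intro x b h w
  induction w generalizing h with
  | nil => exact fun _ => ⟨Walk.nil _, trivial, trivial, rfl⟩
  | @cons x y b s w ih =>
    intro ⟨Hx, Ho⟩
    obtain ⟨w', o', c', l'⟩ := ih s.headEnd Ho
    by_cases hb : (h && s.headStart) = true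
    · rw [if_pos hb] at Hx
      by_cases hxC : x ∈ C
      · exact ⟨Walk.cons s w', ⟨by rw [if_pos hb]; exact Hx, o'⟩,
          ⟨fun _ => hxC, c'⟩, l'⟩
      · have h1 : h = true := (Bool.and_eq_true _ _).mp hb |>.1
        subst h1
        obtain ⟨c, hcC, hrt⟩ := Hx
        obtain ⟨w'', o'', c'', l''⟩ := detour hcC hrt hxC (Walk.cons s w')
          ⟨by simp [hxC], o'⟩ ⟨by simp, c'⟩
        exact ⟨w'', o'', c'', by
          rw [l'']
          show lastHeadFrom s.headEnd w' = lastHeadFrom s.headEnd w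
          exact l'⟩
    · rw [if_neg hb] at Hx
      exact ⟨Walk.cons s w', ⟨by rw [if_neg hb]; exact Hx, o'⟩,
        ⟨fun hc => absurd hc hb, c'⟩, l'⟩

end Walk
end DMG

/-- Proposition 1: if there is a μ-connecting walk from `a`
to `b` given `C`, then there is one on which, moreover, every collider is in `C`. -/
theorem stmt0 {V : Type u} [Fintype V] (G : DMG V) (a b : V) (C : Set V)
    (h : ∃ w : DMG.Walk G a b, w.MuConn C) :
    ∃ w : DMG.Walk G a b, w.MuConn C ∧ w.CollidersIn C := by
  obtain ⟨w, hw⟩ := h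
  cases w with
  | nil => exact absurd hw not_false
  | cons s w0 =>
    obtain ⟨h1, h2, h3⟩ := hw
    obtain ⟨w0', o, cI, lh⟩ := DMG.Walk.fixWalk s.headEnd w0 h2
    refine ⟨DMG.Walk.cons s w0', ⟨h1, o, ?_⟩, cI⟩
    rw [DMG.Walk.lastHead_cons, lh, ← DMG.Walk.lastHead_cons]
    exact h3
end

section
/- Let D = (V,E) be a directed graph (a DMG with no bidirected edges) and let α, β ∈ V. Then β is separable from α in the independence model I(D) if and only if there is no directed edge from α to β in D. -/
/-!
Directed mixed graphs (DMGs) with μ-separation, following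
Mogensen & Hansen, "Markov equivalence of marginalized local independence graphs".
-/

universe u

lemma stmt2_aux {V : Type u} (G : DMG V) (hDG : ∀ a b : V, ¬ G.bi a b) (a : V)
    (A : Set V) :
    ∀ {x y : V} (w : DMG.Walk G x y) (h : Bool),
      ¬ G.dir a y →
      DMG.Walk.openFrom {p | G.dir p y ∧ p ≠ a} A h w →
      w.lastHead = true → False := by
  intro x y w
  induction w with
  | nil => intro h _ _ hl; simp [DMG.Walk.lastHead] at hl
  | cons s w ih =>
    intro h hab hopen hl
    cases w with
    | nil =>
      cases s with
      | dirF hd =>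
        have hx := hopen.1
        simp [DMG.Step.headStart] at hx
        exact hab ((hx hd) ▸ hd)
      | dirB hd => simp [DMG.Walk.lastHead, DMG.Step.headEnd] at hl
      | bid hb => exact hDG _ _ hb
    | cons t w' =>
      exact ih s.headEnd hab hopen.2 hl

/-- Proposition 3: in a directed graph (a DMG with no
bidirected edges), `b` is separable from `a` in `I(D)` iff there is no
directed edge from `a` to `b`. -/
theorem stmt2 {V : Type u} [Fintype V] (G : DMG V)
    (hDG : ∀ a b : V, ¬ G.bi a b) (a b : V) :
    G.separable a b ↔ ¬ G.dir a b := by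
  constructor
  · rintro ⟨C, haC, hsep⟩ hab
    exact hsep rfl rfl (.cons (.dirF hab) (.nil b)) ⟨haC, trivial, rfl⟩
  · intro hab
    refine ⟨{p | G.dir p b ∧ p ≠ a}, by simp, ?_⟩
    rintro x y rfl rfl w hw
    cases w with
    | nil => exact hw
    | cons s w' =>
      obtain ⟨ha, hopen, hl⟩ := hw
      cases w' with
      | nil =>
        cases s with
        | dirF hd => exact hab hd
        | dirB hd => simp [DMG.Walk.lastHead, DMG.Step.headEnd] at hl
        | bid hb => exact hDG _ _ hb
      | cons t w'' =>
        exact stmt2_aux G hDG x (G.anSet _) (DMG.Walk.cons t w'') s.headEnd hab hopen hl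
end

section
/- Let G = (V,E) be a directed mixed graph and O ⊆ V. Then the latent projection m(G,O) is a directed mixed graph on node set O, and if G satisfies property (*) — for all nodes α, β, if α↔β is in G then the bidirected loop α↔α is in G — then m(G,O) also satisfies property (*). -/
/-!
Directed mixed graphs (DMGs) with μ-separation, following
Mogensen & Hansen, "Markov equivalence of marginalized local independence graphs".
-/

universe u

namespace DMG

variable {V : Type u}

/-!
On a collider-free walk, an edge with a head at its far end forces the next edge to leave
that node through a tail, so it too points forwards: a collider-free walk that starts with
a tail ends with a head, and `m(G, O)` has no edge with tails at both ends.

For (*), look at the edge at `α` of a walk inducing `α ↔ β` in `m(G, O)`: it has a head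
at `α`. Either it is a bidirected edge `α ↔ γ` of `G`, and (*) in `G` gives `α ↔ α`, or it
is a directed edge `γ → α` with `γ` an interior, hence latent, node, and then
`α ← γ → α` is a collider-free walk through `M` inducing `α ↔ α` in `m(G, O)`.
-/

variable {G : DMG V}

namespace Walk

lemma nodes_ne_nil : ∀ {a b : V} (w : Walk G a b), w.nodes ≠ []
  | _, _, .nil _ => List.cons_ne_nil _ _
  | _, _, .cons _ _ => List.cons_ne_nil _ _

lemma interior_cons_cons {a b c d : V} (s : Step G a b) (t : Step G b c) (w : Walk G c d) :
    (cons s (cons t w)).interior = b :: (cons t w).interior := by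
  simp only [interior, nodes, List.dropLast_cons_of_ne_nil (List.cons_ne_nil _ _),
    List.dropLast_cons_of_ne_nil w.nodes_ne_nil, List.drop_one, List.tail_cons]

lemma lastHead_eq_true_of_collInFrom_empty : ∀ {a b c : V} (s : Step G a b) (w : Walk G b c),
    s.headEnd = true → collInFrom (∅ : Set V) s.headEnd w → (cons s w).lastHead = true
  | _, _, _, _, .nil _, hs, _ => hs
  | _, _, _, _, .cons t w, hs, hc => by
    obtain ⟨hcoll, hw⟩ := hc
    have ht : t.headStart = false := by
      simpa [hs] using hcoll
    have ht' : t.headEnd = true := by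
      cases t <;> simp_all [Step.headStart, Step.headEnd]
    exact lastHead_eq_true_of_collInFrom_empty t w ht' hw

lemma NoColliders.lastHead_eq_true {a b : V} {w : Walk G a b} (hw : w.NoColliders)
    (hf : w.firstHead = false) (hnt : w.Nontrivial) : w.lastHead = true := by
  cases w with
  | nil => exact hnt.elim
  | cons s w =>
    have hs : s.headEnd = true := by
      cases s <;> simp_all [firstHead, Step.headStart, Step.headEnd]
    exact lastHead_eq_true_of_collInFrom_empty s w hs hw

lemma exists_bi_or_dir_interior_of_firstHead {x y : V} (w : Walk G x y)
    (hf : w.firstHead = true) (hl : w.lastHead = true) :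
    (∃ c, G.bi x c) ∨ ∃ c ∈ w.interior, G.dir c x := by
  match w, hf, hl with
  | .cons (.bid h) _, _, _ => exact Or.inl ⟨_, h⟩
  | .cons (.dirB h) (.cons _ _), _, _ =>
    exact Or.inr ⟨_, by simp [interior_cons_cons], h⟩

lemma exists_bi_or_dir_interior_of_lastHead : ∀ {x y : V} (w : Walk G x y),
    w.lastHead = true →
      (∃ c, G.bi c y) ∨ (∃ c ∈ w.interior, G.dir c y) ∨ (G.dir x y ∧ w.firstHead = false)
  | _, _, .cons (.dirF h) (.nil _), _ => Or.inr (Or.inr ⟨h, rfl⟩)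
  | _, _, .cons (.bid h) (.nil _), _ => Or.inl ⟨_, h⟩
  | _, _, .cons s (.cons t w), hl => by
    rcases exists_bi_or_dir_interior_of_lastHead (cons t w) hl with h | ⟨c, hc, h⟩ | ⟨h, _⟩
    · exact Or.inl h
    · exact Or.inr (Or.inl ⟨c, by simp [interior_cons_cons, hc], h⟩)
    · exact Or.inr (Or.inl ⟨_, by simp [interior_cons_cons], h⟩)

end Walk

variable {M : Set V}

lemma not_connThrough_false_false {a b : V} : ¬ G.ConnThrough M a b false false :=
  fun ⟨w, hnt, hw, _, hf, hl⟩ => by simp [hw.lastHead_eq_true hf hnt] at hl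

lemma connThrough_self_of_bi {a : V} (h : G.bi a a) : G.ConnThrough M a a true true :=
  ⟨.cons (.bid h) (.nil a), trivial, trivial, by simp [Walk.interior, Walk.nodes], rfl, rfl⟩

lemma connThrough_self_of_dir {a c : V} (hc : c ∈ M) (h : G.dir c a) :
    G.ConnThrough M a a true true :=
  ⟨.cons (.dirB h) (.cons (.dirF h) (.nil a)), trivial,
    ⟨fun h' => by simp [Step.headEnd] at h', trivial⟩,
    by simpa [Walk.interior, Walk.nodes] using hc, rfl, rfl⟩

lemma connThrough_self_of_connThrough_left (hstar : ∀ a b : V, G.bi a b → G.bi a a)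
    {a b : V} (h : G.ConnThrough M a b true true) :
    G.ConnThrough M a a true true := by
  obtain ⟨w, -, -, hM, hf, hl⟩ := h
  rcases w.exists_bi_or_dir_interior_of_firstHead hf hl with ⟨c, hc⟩ | ⟨c, hc, hd⟩
  · exact connThrough_self_of_bi (hstar _ _ hc)
  · exact connThrough_self_of_dir (hM c hc) hd

lemma connThrough_self_of_connThrough_right (hstar : ∀ a b : V, G.bi a b → G.bi a a)
    {a b : V} (h : G.ConnThrough M b a true true) :
    G.ConnThrough M a a true true := by
  obtain ⟨w, -, -, hM, hf, hl⟩ := h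
  rcases w.exists_bi_or_dir_interior_of_lastHead hl with ⟨c, hc⟩ | ⟨c, hc, hd⟩ | ⟨-, hf'⟩
  · exact connThrough_self_of_bi (hstar _ _ (G.bi_symm _ _ hc))
  · exact connThrough_self_of_dir (hM c hc) hd
  · simp [hf'] at hf

end DMG

theorem stmt3_general {V : Type u} (G : DMG V) (O : Set V) :
    (∀ a b : V, a ∈ O → b ∈ O → ¬ DMG.ConnThrough G Oᶜ a b false false) ∧
    ((∀ a b : V, G.bi a b → G.bi a a) →
      ∀ a b : {x : V // x ∈ O}, (G.latentProj O).bi a b → (G.latentProj O).bi a a) := by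
  refine ⟨fun _ _ _ _ => DMG.not_connThrough_false_false, fun hstar a b hab => Or.inl ?_⟩
  rcases hab with h | h
  · exact DMG.connThrough_self_of_connThrough_left hstar h
  · exact DMG.connThrough_self_of_connThrough_right hstar h

/-- Proposition 4: the latent projection `m(G, O)` is a DMG
on node set `O` (i.e. the projection never creates an edge with a tail at both
endpoints), and if `G` satisfies property (*) — `α ↔ β` in `G` implies
`α ↔ α` in `G` — then so does `m(G, O)`. -/
theorem stmt3 {V : Type u} [Fintype V] (G : DMG V) (O : Set V) :
    (∀ a b : V, a ∈ O → b ∈ O → ¬ DMG.ConnThrough G Oᶜ a b false false) ∧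
    ((∀ a b : V, G.bi a b → G.bi a a) →
      ∀ a b : {x : V // x ∈ O}, (G.latentProj O).bi a b → (G.latentProj O).bi a a) :=
  stmt3_general G O
end

section
/- Let G = (V,E) be a directed mixed graph satisfying property (*) — for all nodes α, β, if α↔β is in G then α↔α is in G — and let α ∈ V. Then α has no loops (neither α→α nor α↔α) if and only if α is μ-separated from α given V∖{α} in G. -/
/-!
Directed mixed graphs (DMGs) with μ-separation, following
Mogensen & Hansen, "Markov equivalence of marginalized local independence graphs".
-/

universe u

private lemma stmt4_aux {V : Type u} (G : DMG V)
    (hstar : ∀ a b : V, G.bi a b → G.bi a a)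
    (a : V) (hd : ¬ G.dir a a) (hb : ¬ G.bi a a) :
    ∀ {x y : V} (w : DMG.Walk G x y) (h : Bool), y = a →
      DMG.Walk.openFrom {y : V | y ≠ a} (G.anSet {y : V | y ≠ a}) h w →
      w.lastHead = true → w.Nontrivial → False := by
  intro x y w
  induction w with
  | nil => intro h _ _ _ hnt; exact hnt
  | @cons x b c s w ih =>
    intro h hy hopen hlast _
    cases w with
    | nil =>
      cases s with
      | dirF hxa =>
        have hx : x = a := by
          have := hopen.1
          simp [DMG.Step.headStart] at this
          exact this
        apply hd
        rwa [hx, hy] at hxa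
      | dirB _ =>
        simp [DMG.Walk.lastHead, DMG.Step.headEnd] at hlast
      | bid hxa =>
        apply hb
        have h1 := G.bi_symm _ _ hxa
        rw [hy] at h1
        exact hstar a x h1
    | cons t w' =>
      exact ih s.headEnd hy hopen.2 hlast trivial

/-- Proposition 5: if `G` satisfies property (*) — `α ↔ β`
in `G` implies `α ↔ α` in `G` — then `a` has no loops iff `a` is μ-separated
from `a` given `V ∖ {a}`. -/
theorem stmt4 {V : Type u} [Fintype V] (G : DMG V)
    (hstar : ∀ a b : V, G.bi a b → G.bi a a) (a : V) :
    (¬ G.dir a a ∧ ¬ G.bi a a) ↔ DMG.muSep G {a} {a} {x : V | x ≠ a} := by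
  constructor
  · rintro ⟨hd, hb⟩
    intro x y hx hy w hmu
    obtain rfl := (show x = a from hx).symm
    obtain rfl := (show y = a from hy).symm
    cases w with
    | nil => exact hmu
    | cons s w =>
      obtain ⟨-, hopen, hlast⟩ := hmu
      cases w with
      | nil =>
        cases s with
        | dirF h => exact hd h
        | dirB h => exact hd h
        | bid h => exact hb h
      | cons t w' =>
        exact stmt4_aux G hstar a hd hb _ s.headEnd rfl hopen hlast trivial
  · intro hsep
    constructor
    · intro h
      exact hsep rfl rfl (DMG.Walk.cons (DMG.Step.dirF h) (DMG.Walk.nil a))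
        ⟨by simp, trivial, rfl⟩
    · intro h
      exact hsep rfl rfl (DMG.Walk.cons (DMG.Step.bid h) (DMG.Walk.nil a))
        ⟨by simp, trivial, rfl⟩
end

section
/- Let G = (V,E) be a directed mixed graph, O ⊆ V, M = m(G,O) the latent projection of G on O, and α, β ∈ O. Then α is an ancestor of β in G if and only if α is an ancestor of β in M. -/
/-!
Directed mixed graphs (DMGs) with μ-separation, following
Mogensen & Hansen, "Markov equivalence of marginalized local independence graphs".
-/

universe u

namespace DMG

variable {V : Type u} {G : DMG V}

lemma Walk.nodes_ne_nil_s5 : ∀ {x y : V} (w : Walk G x y), w.nodes ≠ []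
  | _, _, .nil _ => by simp [Walk.nodes]
  | _, _, .cons _ _ => by simp [Walk.nodes]

lemma Walk.interior_cons {x m y : V} (s : Step G x m) (w : Walk G m y) :
    (Walk.cons s w).interior = w.nodes.dropLast := by
  simp [Walk.interior, Walk.nodes, List.dropLast_cons_of_ne_nil (Walk.nodes_ne_nil_s5 w)]

lemma Walk.dropLast_nodes_cons {x m y : V} (s : Step G x m) (w : Walk G m y) :
    (Walk.cons s w).nodes.dropLast = x :: (Walk.cons s w).interior := by
  simp [Walk.nodes, Walk.interior, List.dropLast_cons_of_ne_nil (Walk.nodes_ne_nil_s5 w)]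

/-- Directed walks from `x` to `y` with all internal nodes outside `O`. -/
inductive DW (G : DMG V) (O : Set V) : V → V → Prop
  | single {x y : V} : G.dir x y → DW G O x y
  | cons {x z y : V} : G.dir x z → z ∉ O → DW G O z y → DW G O x y

lemma dw_to_conn {O : Set V} {x y : V} (h : DW G O x y) :
    ConnThrough G Oᶜ x y false true := by
  suffices H : ∃ w : Walk G x y, w.Nontrivial ∧ w.firstHead = false ∧ w.lastHead = true ∧
      w.NoColliders ∧ ∀ z ∈ w.interior, z ∉ O by
    obtain ⟨w, hnt, hfh, hlh, hnc, hint⟩ := H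
    exact ⟨w, hnt, hnc, fun z hz => hint z hz, hfh, hlh⟩
  induction h with
  | single hd =>
      refine ⟨.cons (.dirF hd) (.nil _), trivial, rfl, rfl, trivial, ?_⟩
      intro z hz
      simp [Walk.interior, Walk.nodes] at hz
  | @cons x z y hd hz hdw ih =>
      obtain ⟨w, hnt, hfh, hlh, hnc, hint⟩ := ih
      cases w with
      | nil _ => exact hnt.elim
      | cons t w' =>
          refine ⟨.cons (.dirF hd) (.cons t w'), trivial, rfl, hlh, ⟨?_, hnc⟩, ?_⟩
          · intro hcontra
            have ht : t.headStart = false := hfh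
            rw [ht] at hcontra
            simp at hcontra
          · intro u hu
            rw [Walk.interior_cons, Walk.dropLast_nodes_cons] at hu
            simp only [List.mem_cons] at hu
            rcases hu with rfl | hu
            · exact hz
            · exact hint u hu

lemma walk_anc : ∀ {x y : V} (w : Walk G x y),
    Walk.collInFrom ∅ true w → Relation.ReflTransGen G.dir x y
  | _, _, .nil _, _ => .refl
  | x, y, .cons s w, h => by
      obtain ⟨h1, h2⟩ := h
      cases s with
      | dirF hd => exact .head hd (walk_anc w h2)
      | dirB hd => exact absurd (h1 rfl) (Set.notMem_empty x)
      | bid hd => exact absurd (h1 rfl) (Set.notMem_empty x)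

lemma conn_anc {M : Set V} {u v : V} {he : Bool}
    (h : ConnThrough G M u v false he) : Relation.ReflTransGen G.dir u v := by
  obtain ⟨w, _, hnc, _, hfh, _⟩ := h
  cases w with
  | nil _ => exact .refl
  | cons s w' =>
      cases s with
      | dirF hd => exact .head hd (walk_anc w' hnc)
      | dirB hd => simp [Walk.firstHead, Step.headStart] at hfh
      | bid hd => simp [Walk.firstHead, Step.headStart] at hfh

end DMG

/-- Proposition 6: the latent projection preserves ancestry:
for `a, b ∈ O`, `a` is an ancestor of `b` in `G` iff `a` is an ancestor of
`b` in `m(G, O)`. -/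
theorem stmt5 {V : Type u} [Fintype V] (G : DMG V) (O : Set V) (a b : V)
    (ha : a ∈ O) (hb : b ∈ O) :
    G.anc a b ↔ (G.latentProj O).anc ⟨a, ha⟩ ⟨b, hb⟩ := by
  constructor
  · intro h
    suffices H : ∃ y, ∃ hy : y ∈ O, (G.latentProj O).anc ⟨y, hy⟩ ⟨b, hb⟩ ∧
        (a = y ∨ DMG.DW G O a y) by
      obtain ⟨y, hy, hanc, hcase⟩ := H
      rcases hcase with rfl | hdw
      · exact hanc
      · exact Relation.ReflTransGen.head (DMG.dw_to_conn hdw) hanc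
    clear ha
    induction h using Relation.ReflTransGen.head_induction_on with
    | refl => exact ⟨b, hb, .refl, Or.inl rfl⟩
    | head hxc _ ih =>
        rename_i x c _
        obtain ⟨y, hy, hanc, hcase⟩ := ih
        by_cases hc : c ∈ O
        · refine ⟨c, hc, ?_, Or.inr (DMG.DW.single hxc)⟩
          rcases hcase with rfl | hdw
          · exact hanc
          · exact Relation.ReflTransGen.head (DMG.dw_to_conn hdw) hanc
        · refine ⟨y, hy, hanc, Or.inr ?_⟩
          rcases hcase with rfl | hdw
          · exact absurd hy hc
          · exact DMG.DW.cons hxc hc hdw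
  · intro h
    have key : ∀ (p q : {x : V // x ∈ O}),
        Relation.ReflTransGen (G.latentProj O).dir p q →
        Relation.ReflTransGen G.dir p.1 q.1 := by
      intro p q h
      induction h with
      | refl => exact .refl
      | tail _ hdir ih => exact ih.trans (DMG.conn_anc hdir)
    exact key _ _ h
end
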